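/- κ d J_rΛ^k(ℝ^n) = J_rΛ^k(ℝ^n): applying the exterior derivative followed by the Koszul operator to the space J_rΛ^k(ℝ^n) recovers the same space. -/

import Mathlib

open MvPolynomial

/-- Polynomial differential forms on `ℝ^n`: a family of polynomial coefficients indexed by
subsets `σ ⊆ {1,…,n}`; a `k`-form is supported on sets of cardinality `k`. -/
abbrev PolyForm (n : ℕ) := Finset (Fin n) → MvPolynomial (Fin n) ℝ

/-- The sign `(-1)^{#{j ∈ σ : j < i}}`. -/
noncomputable def sgn {n : ℕ} (σ : Finset (Fin n)) (i : Fin n) : MvPolynomial (Fin n) ℝ :=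
  (-1) ^ (σ.filter (fun j => j < i)).card

/-- The exterior derivative `d`. -/
noncomputable def extD (n : ℕ) : PolyForm n →ₗ[ℝ] PolyForm n where
  toFun ω := fun σ => ∑ i ∈ σ, sgn σ i * pderiv i (ω (σ.erase i))
  map_add' ω η := by
    funext σ
    simp [Pi.add_apply, mul_add, Finset.sum_add_distrib]
  map_smul' c ω := by
    funext σ
    simp [Pi.smul_apply, Finset.smul_sum, mul_smul_comm]

/-- The Koszul operator `κ` (contraction with the position vector field). -/
noncomputable def koszul (n : ℕ) : PolyForm n →ₗ[ℝ] PolyForm n where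
  toFun ω := fun σ => ∑ i ∈ σᶜ, sgn σ i * X i * ω (insert i σ)
  map_add' ω η := by
    funext σ
    simp [Pi.add_apply, mul_add, Finset.sum_add_distrib]
  map_smul' c ω := by
    funext σ
    simp [Pi.smul_apply, Finset.smul_sum, mul_smul_comm]

/-- The space of (polynomial) differential `k`-forms: families supported on index sets of
cardinality `k`. -/
noncomputable def Lambda (n k : ℕ) : Submodule ℝ (PolyForm n) where
  carrier := {ω | ∀ σ, σ.card ≠ k → ω σ = 0}
  zero_mem' := fun σ _ => rfl
  add_mem' := fun ha hb σ h => by simp only [Pi.add_apply, ha σ h, hb σ h, add_zero]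
  smul_mem' := fun c ω h σ hσ => by simp only [Pi.smul_apply, h σ hσ, smul_zero]

/-- The form monomial `x^α dx_σ`. -/
noncomputable def formMonomial {n : ℕ} (α : Fin n →₀ ℕ) (σ : Finset (Fin n)) : PolyForm n :=
  fun τ => if τ = σ then monomial α 1 else 0

/-- The (total) degree `|α|` of a multi-index. -/
def mdeg {n : ℕ} (α : Fin n →₀ ℕ) : ℕ := α.sum fun _ m => m

/-- The linear degree of the form monomial `x^α dx_σ`: the number of `i ∉ σ` with `α i = 1`. -/
def ldeg {n : ℕ} (α : Fin n →₀ ℕ) (σ : Finset (Fin n)) : ℕ :=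
  ((σᶜ).filter fun i => α i = 1).card

/-- `H_rΛ^k(ℝ^n)`: `k`-forms with homogeneous degree-`r` polynomial coefficients. -/
noncomputable def Hspace (n r k : ℕ) : Submodule ℝ (PolyForm n) :=
  Submodule.span ℝ {ω | ∃ α σ, σ.card = k ∧ mdeg α = r ∧ ω = formMonomial α σ}

/-- `P_rΛ^k(ℝ^n)`: `k`-forms with polynomial coefficients of degree at most `r`. -/
noncomputable def Pspace (n r k : ℕ) : Submodule ℝ (PolyForm n) :=
  Submodule.span ℝ {ω | ∃ α σ, σ.card = k ∧ mdeg α ≤ r ∧ ω = formMonomial α σ}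

/-- `H_{r,l}Λ^k(ℝ^n)`: homogeneous degree-`r` `k`-forms of linear degree at least `l`. -/
noncomputable def Hl (n r l k : ℕ) : Submodule ℝ (PolyForm n) :=
  Submodule.span ℝ
    {ω | ∃ α σ, σ.card = k ∧ mdeg α = r ∧ l ≤ ldeg α σ ∧ ω = formMonomial α σ}

/-- `J_rΛ^k(ℝ^n) := Σ_{l ≥ 1} κ H_{r+l-1, l}Λ^{k+1}(ℝ^n)` (here `l` is reindexed as `l+1`). -/
noncomputable def Jspace (n r k : ℕ) : Submodule ℝ (PolyForm n) :=
  ⨆ l : ℕ, Submodule.map (koszul n) (Hl n (r + l) (l + 1) (k + 1))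

/-- The trimmed polynomial space `P_r^-Λ^k := P_{r-1}Λ^k ⊕ κ H_{r-1}Λ^{k+1}`. -/
noncomputable def PminusSpace (n r k : ℕ) : Submodule ℝ (PolyForm n) :=
  Pspace n (r - 1) k ⊔ Submodule.map (koszul n) (Hspace n (r - 1) (k + 1))

/-- The serendipity space `S_rΛ^k := P_rΛ^k + J_rΛ^k + d J_{r+1}Λ^{k-1}`
(the last summand being absent for `k = 0`). -/
noncomputable def Sspace (n r k : ℕ) : Submodule ℝ (PolyForm n) :=
  Pspace n r k ⊔ Jspace n r k ⊔
    (if k = 0 then ⊥ else Submodule.map (extD n) (Jspace n (r + 1) (k - 1)))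

/-- The trimmed serendipity space `S_r^-Λ^k := S_{r-1}Λ^k + κ S_{r-1}Λ^{k+1}`. -/
noncomputable def SminusSpace (n r k : ℕ) : Submodule ℝ (PolyForm n) :=
  Sspace n (r - 1) k ⊔ Submodule.map (koszul n) (Sspace n (r - 1) (k + 1))

/-!
With `κκ = 0`, the homotopy formula `dκ + κd = k + Σ xᵢ∂ᵢ` on `k`-forms and Euler's identity
give `κdκω = (r + k)·κω` for a form monomial `ω` of polynomial degree `r` and form degree `k`.
The generators of `J_rΛ^k` are such `κω` with form degree `k + 1 ≥ 1`, so `κd` multiplies each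
of them by a nonzero scalar and hence maps every summand `κH_{r+l,l+1}Λ^{k+1}` onto itself.
-/

theorem Finset.sum_sum_erase_eq_zero_of_antisymm {ι M : Type*} [DecidableEq ι] [AddCommMonoid M]
    (s : Finset ι) (f : ι → ι → M) (hf : ∀ i ∈ s, ∀ j ∈ s, i ≠ j → f i j + f j i = 0) :
    ∑ i ∈ s, ∑ j ∈ s.erase i, f i j = 0 := by
  rw [← Finset.sum_finset_product' s.offDiag s (fun i => s.erase i) fun p => by
    simp only [Finset.mem_offDiag, Finset.mem_erase]; tauto]
  refine Finset.sum_involution (fun p _ => p.swap) (fun p hp => ?_) (fun p hp _ => ?_)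
    (fun p hp => by simp only [Finset.mem_offDiag] at hp ⊢; tauto) (fun p _ => p.swap_swap)
  · obtain ⟨hi, hj, hij⟩ := Finset.mem_offDiag.1 hp
    exact hf _ hi _ hj hij
  · obtain ⟨-, -, hij⟩ := Finset.mem_offDiag.1 hp
    exact fun h => hij (Prod.ext_iff.1 h).2

theorem Submodule.map_span_eq_of_forall_eq_smul {K M : Type*} [Field K] [AddCommGroup M]
    [Module K M] (T : M →ₗ[K] M) (S : Set M) (hS : ∀ x ∈ S, ∃ c : K, c ≠ 0 ∧ T x = c • x) :
    (span K S).map T = span K S := by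
  rw [Submodule.map_span]
  apply le_antisymm <;> rw [Submodule.span_le]
  · rintro _ ⟨x, hx, rfl⟩
    obtain ⟨c, -, hc⟩ := hS x hx
    exact hc ▸ Submodule.smul_mem _ _ (Submodule.subset_span hx)
  · intro x hx
    obtain ⟨c, hc0, hc⟩ := hS x hx
    rw [← inv_smul_smul₀ hc0 x, ← hc]
    exact Submodule.smul_mem _ _ (Submodule.subset_span ⟨x, hx, rfl⟩)

section KoszulComplex

variable {n : ℕ}

theorem sgn_mul_self (σ : Finset (Fin n)) (i : Fin n) : sgn σ i * sgn σ i = 1 := by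
  rw [sgn, ← pow_add]
  exact Even.neg_one_pow ⟨_, rfl⟩

theorem sgn_insert {σ : Finset (Fin n)} {j : Fin n} (i : Fin n) (h : j ∉ σ) :
    sgn (insert j σ) i = (if j < i then -1 else 1) * sgn σ i := by
  unfold sgn
  rw [Finset.filter_insert]
  split_ifs with hij
  · rw [Finset.card_insert_of_notMem (fun hc => h (Finset.mem_filter.1 hc).1), pow_succ]
    ring
  · rw [one_mul]

theorem sgn_insert_self (σ : Finset (Fin n)) (i : Fin n) : sgn (insert i σ) i = sgn σ i := by
  rw [sgn, sgn, Finset.filter_insert, if_neg (lt_irrefl i)]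

theorem sgn_erase_self (σ : Finset (Fin n)) (i : Fin n) : sgn (σ.erase i) i = sgn σ i := by
  unfold sgn
  rw [Finset.filter_erase, Finset.erase_eq_of_notMem (by simp)]

theorem sgn_mul_sgn_insert_swap {σ : Finset (Fin n)} {i j : Fin n}
    (hi : i ∉ σ) (hj : j ∉ σ) (hij : i ≠ j) :
    sgn σ i * sgn (insert i σ) j = -(sgn σ j * sgn (insert j σ) i) := by
  rw [sgn_insert j hi, sgn_insert i hj]
  rcases hij.lt_or_gt with h | h
  · rw [if_pos h, if_neg h.asymm]; ring
  · rw [if_neg h.asymm, if_pos h]; ring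

theorem sgn_mul_sgn_erase_swap {σ : Finset (Fin n)} {i j : Fin n} (hi : i ∈ σ) (hj : j ∉ σ) :
    sgn σ i * sgn (σ.erase i) j = -(sgn σ j * sgn (insert j σ) i) := by
  obtain ⟨τ, hiτ, rfl⟩ : ∃ τ, i ∉ τ ∧ σ = insert i τ :=
    ⟨σ.erase i, Finset.notMem_erase i σ, (Finset.insert_erase hi).symm⟩
  have hjτ : j ∉ τ := fun h => hj (Finset.mem_insert_of_mem h)
  have hij : i ≠ j := fun h => hj (h ▸ Finset.mem_insert_self i τ)
  rw [Finset.erase_insert hiτ, Finset.insert_comm j i τ, sgn_insert_self, sgn_insert_self,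
    sgn_insert j hiτ, sgn_insert i hjτ]
  rcases hij.lt_or_gt with h | h
  · rw [if_pos h, if_neg h.asymm]; ring
  · rw [if_neg h.asymm, if_pos h]; ring

theorem pderiv_sgn (σ : Finset (Fin n)) (i j : Fin n) : pderiv i (sgn σ j) = 0 := by
  simp [sgn]

theorem pderiv_sgn_mul_X_mul {σ : Finset (Fin n)} {i j k : Fin n} (f : MvPolynomial (Fin n) ℝ)
    (h : j ≠ i) : pderiv i (sgn σ k * X j * f) = sgn σ k * X j * pderiv i f := by
  simp [Derivation.leibniz, pderiv_sgn, pderiv_X_of_ne h]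

theorem pderiv_sgn_mul_X_self_mul (σ : Finset (Fin n)) (i k : Fin n)
    (f : MvPolynomial (Fin n) ℝ) :
    pderiv i (sgn σ k * X i * f) = sgn σ k * (f + X i * pderiv i f) := by
  simp only [Derivation.leibniz, smul_eq_mul, pderiv_X_self, pderiv_sgn, mul_one, mul_zero,
    add_zero]
  ring

theorem koszul_apply (ω : PolyForm n) (σ : Finset (Fin n)) :
    koszul n ω σ = ∑ i ∈ σᶜ, sgn σ i * X i * ω (insert i σ) := rfl

theorem extD_apply (ω : PolyForm n) (σ : Finset (Fin n)) :
    extD n ω σ = ∑ i ∈ σ, sgn σ i * pderiv i (ω (σ.erase i)) := rfl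

theorem koszul_koszul (ω : PolyForm n) : koszul n (koszul n ω) = 0 := by
  funext σ
  simp only [koszul_apply, Finset.compl_insert, Finset.mul_sum]
  refine Finset.sum_sum_erase_eq_zero_of_antisymm _ _ fun i hi j hj hij => ?_
  rw [Finset.mem_compl] at hi hj
  rw [Finset.insert_comm j i]
  linear_combination (X i * X j * ω (insert i (insert j σ))) * sgn_mul_sgn_insert_swap hi hj hij

theorem extD_koszul_apply (ω : PolyForm n) (σ : Finset (Fin n)) :
    extD n (koszul n ω) σ
      = ∑ i ∈ σ, (ω σ + X i * pderiv i (ω σ))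
        + ∑ i ∈ σ, ∑ j ∈ σᶜ, sgn σ i * sgn (σ.erase i) j *
            (X j * pderiv i (ω (insert j (σ.erase i)))) := by
  rw [extD_apply, ← Finset.sum_add_distrib]
  refine Finset.sum_congr rfl fun i hi => ?_
  rw [koszul_apply, Finset.compl_erase, Finset.sum_insert (by simp [hi]), Finset.insert_erase hi,
    sgn_erase_self, map_add, map_sum, mul_add, pderiv_sgn_mul_X_self_mul, Finset.mul_sum]
  congr 1
  · linear_combination (ω σ + X i * pderiv i (ω σ)) * sgn_mul_self σ i
  · refine Finset.sum_congr rfl fun j hj => ?_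
    rw [pderiv_sgn_mul_X_mul _ fun h : j = i => Finset.mem_compl.1 hj (h ▸ hi)]
    ring

theorem koszul_extD_apply (ω : PolyForm n) (σ : Finset (Fin n)) :
    koszul n (extD n ω) σ
      = ∑ i ∈ σᶜ, X i * pderiv i (ω σ)
        - ∑ i ∈ σ, ∑ j ∈ σᶜ, sgn σ i * sgn (σ.erase i) j *
            (X j * pderiv i (ω (insert j (σ.erase i)))) := by
  rw [Finset.sum_comm, koszul_apply, sub_eq_add_neg, ← Finset.sum_neg_distrib,
    ← Finset.sum_add_distrib]
  refine Finset.sum_congr rfl fun j hj => ?_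
  have hjσ : j ∉ σ := Finset.mem_compl.1 hj
  rw [extD_apply, Finset.sum_insert hjσ, Finset.erase_insert hjσ, sgn_insert_self, mul_add,
    Finset.mul_sum, ← Finset.sum_neg_distrib]
  congr 1
  · linear_combination (X j * pderiv j (ω σ)) * sgn_mul_self σ j
  · refine Finset.sum_congr rfl fun i hi => ?_
    rw [Finset.erase_insert_of_ne fun h : j = i => hjσ (h ▸ hi)]
    linear_combination (X j * pderiv i (ω (insert j (σ.erase i)))) * sgn_mul_sgn_erase_swap hi hjσ

theorem extD_koszul_add_koszul_extD_apply (ω : PolyForm n) (σ : Finset (Fin n)) :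
    extD n (koszul n ω) σ + koszul n (extD n ω) σ
      = σ.card • ω σ + ∑ i, X i * pderiv i (ω σ) := by
  rw [extD_koszul_apply, koszul_extD_apply, Finset.sum_add_distrib, Finset.sum_const,
    ← Finset.sum_add_sum_compl σ fun i => X i * pderiv i (ω σ)]
  abel

theorem extD_koszul_add_koszul_extD_formMonomial (α : Fin n →₀ ℕ) (σ : Finset (Fin n)) :
    extD n (koszul n (formMonomial α σ)) + koszul n (extD n (formMonomial α σ))
      = ((mdeg α + σ.card : ℕ) : ℝ) • formMonomial α σ := by
  funext τ
  rw [Pi.add_apply, extD_koszul_add_koszul_extD_apply, Pi.smul_apply]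
  by_cases hτ : τ = σ
  · subst hτ
    have hα : (monomial α (1 : ℝ)).IsHomogeneous (mdeg α) := isHomogeneous_monomial 1 rfl
    rw [formMonomial, if_pos rfl, hα.sum_X_mul_pderiv, ← Nat.cast_smul_eq_nsmul ℝ,
      ← Nat.cast_smul_eq_nsmul ℝ (mdeg α), ← add_smul, ← Nat.cast_add, add_comm]
  · simp [formMonomial, hτ]

theorem koszul_extD_koszul_formMonomial (α : Fin n →₀ ℕ) (σ : Finset (Fin n)) :
    koszul n (extD n (koszul n (formMonomial α σ)))
      = ((mdeg α + σ.card : ℕ) : ℝ) • koszul n (formMonomial α σ) := by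
  rw [eq_sub_of_add_eq (extD_koszul_add_koszul_extD_formMonomial α σ), map_sub, map_smul,
    koszul_koszul, sub_zero]

end KoszulComplex

/-- `κ d J_rΛ^k(ℝ^n) = J_rΛ^k(ℝ^n)`. -/
theorem koszul_extD_Jspace (n r k : ℕ) :
    Submodule.map (koszul n) (Submodule.map (extD n) (Jspace n r k)) = Jspace n r k := by
  simp only [Jspace, Submodule.map_iSup]
  refine iSup_congr fun l => ?_
  rw [← Submodule.map_comp, Hl, Submodule.map_span (koszul n)]
  refine Submodule.map_span_eq_of_forall_eq_smul _ _ ?_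
  rintro _ ⟨_, ⟨α, σ, hσ, -, -, rfl⟩, rfl⟩
  exact ⟨_, Nat.cast_ne_zero.2 (by omega), koszul_extD_koszul_formMonomial α σ⟩
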